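/- arXiv:1705.06183 — 10 statements merged into one kernel-verified Lean document; each statement's English description precedes it below -/
import Mathlib

section
/- Let ν₁, ν₂, h, ζ > 0, let σ, b, r > 0 and a ∈ ℝ satisfy b = 1, a > 0 and σ > a·r, and set c = (σ − a·r)/ζ, ρ = r·(σ − a·r)/ζ, α = a·ζ²/(σ − a·r)². If (x, y, z) : ℝ → ℝ³ is differentiable and satisfies the Lorenz-like system with parameters (r, σ, b, a), then the functions X(t) = x(t), Y(t) = c·(r − z(t)), Z(t) = c·y(t) satisfy the Glukhovsky–Dolzhansky system Ẋ = −σ·X + ζ·Z + α·Y·Z, Ẏ = ρ − Y − X·Z, Ż = −Z + X·Y. -/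
/-!
With `c = (σ − a·r)/ζ` the parameters satisfy `ζ·c = σ − a·r`, `α·c² = a` and `ρ = c·r`.
Given these three relations, each Glukhovsky–Dolzhansky equation for `(x, c·(r − z), c·y)` is
`c` times (or, for `X`, exactly) the corresponding Lorenz-like equation with `b = 1`,
rewritten by a polynomial identity.
-/

lemma glukhovskyDolzhansky_param_relations {ζ σ r a c ρ α : ℝ} (hζ : ζ ≠ 0)
    (hσar : σ - a * r ≠ 0) (hc : c = (σ - a * r) / ζ) (hρ : ρ = r * (σ - a * r) / ζ)
    (hα : α = a * ζ ^ 2 / (σ - a * r) ^ 2) :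
    ζ * c = σ - a * r ∧ α * c ^ 2 = a ∧ ρ = c * r := by
  subst hc hρ hα
  refine ⟨?_, ?_, ?_⟩ <;> field_simp

section LorenzLike

variable {ζ σ r a c ρ α : ℝ} {x y z : ℝ → ℝ}

lemma hasDerivAt_glukhovskyDolzhansky_X (hζc : ζ * c = σ - a * r) (hαc : α * c ^ 2 = a)
    {t : ℝ} (hx : HasDerivAt x (-σ * (x t - y t) - a * y t * z t) t) :
    HasDerivAt x (-σ * x t + ζ * (c * y t) + α * (c * (r - z t)) * (c * y t)) t := by
  refine hx.congr_deriv ?_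
  linear_combination -(y t * hζc) - (r - z t) * y t * hαc

lemma hasDerivAt_glukhovskyDolzhansky_Y (hρc : ρ = c * r)
    {t : ℝ} (hz : HasDerivAt z (-1 * z t + x t * y t) t) :
    HasDerivAt (fun s => c * (r - z s)) (ρ - c * (r - z t) - x t * (c * y t)) t := by
  refine ((hz.const_sub r).const_mul c).congr_deriv ?_
  linear_combination -hρc

lemma hasDerivAt_glukhovskyDolzhansky_Z
    {t : ℝ} (hy : HasDerivAt y (r * x t - y t - x t * z t) t) :
    HasDerivAt (fun s => c * y s) (-(c * y t) + x t * (c * (r - z t))) t :=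
  (hy.const_mul c).congr_deriv (by ring)

end LorenzLike

theorem stmt_0_general (ζ σ b r a : ℝ)
    (hζ : 0 < ζ)
    (hb1 : b = 1) (hσar : σ > a * r)
    (c ρ α : ℝ)
    (hc : c = (σ - a * r) / ζ)
    (hρ : ρ = r * (σ - a * r) / ζ)
    (hα : α = a * ζ ^ 2 / (σ - a * r) ^ 2)
    (x y z : ℝ → ℝ)
    (hx : ∀ t, HasDerivAt x (-σ * (x t - y t) - a * y t * z t) t)
    (hy : ∀ t, HasDerivAt y (r * x t - y t - x t * z t) t)
    (hz : ∀ t, HasDerivAt z (-b * z t + x t * y t) t) :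
    (∀ t, HasDerivAt (fun s => x s)
      (-σ * x t + ζ * (c * y t) + α * (c * (r - z t)) * (c * y t)) t) ∧
    (∀ t, HasDerivAt (fun s => c * (r - z s))
      (ρ - c * (r - z t) - x t * (c * y t)) t) ∧
    (∀ t, HasDerivAt (fun s => c * y s)
      (-(c * y t) + x t * (c * (r - z t))) t) := by
  obtain ⟨hζc, hαc, hρc⟩ :=
    glukhovskyDolzhansky_param_relations hζ.ne' (sub_ne_zero.mpr hσar.ne') hc hρ hα
  subst hb1
  exact ⟨fun t => hasDerivAt_glukhovskyDolzhansky_X hζc hαc (hx t),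
    fun t => hasDerivAt_glukhovskyDolzhansky_Y hρc (hz t),
    fun t => hasDerivAt_glukhovskyDolzhansky_Z (hy t)⟩

/-- The linear change of variables `X = x`, `Y = c·(r − z)`, `Z = c·y` with
`c = (σ − a·r)/ζ` transforms the Lorenz-like system (with `b = 1`, `a > 0`,
`σ > a·r`) into the Glukhovsky–Dolzhansky system with parameters
`σ`, `ζ`, `ρ = r·(σ − a·r)/ζ`, `α = a·ζ²/(σ − a·r)²`. -/
theorem stmt_0 (ν₁ ν₂ h ζ σ b r a : ℝ)
    (hν₁ : 0 < ν₁) (hν₂ : 0 < ν₂) (hh : 0 < h) (hζ : 0 < ζ)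
    (hσ : 0 < σ) (hb : 0 < b) (hr : 0 < r)
    (hb1 : b = 1) (ha : 0 < a) (hσar : σ > a * r)
    (c ρ α : ℝ)
    (hc : c = (σ - a * r) / ζ)
    (hρ : ρ = r * (σ - a * r) / ζ)
    (hα : α = a * ζ ^ 2 / (σ - a * r) ^ 2)
    (x y z : ℝ → ℝ)
    (hx : ∀ t, HasDerivAt x (-σ * (x t - y t) - a * y t * z t) t)
    (hy : ∀ t, HasDerivAt y (r * x t - y t - x t * z t) t)
    (hz : ∀ t, HasDerivAt z (-b * z t + x t * y t) t) :
    (∀ t, HasDerivAt (fun s => x s)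
      (-σ * x t + ζ * (c * y t) + α * (c * (r - z t)) * (c * y t)) t) ∧
    (∀ t, HasDerivAt (fun s => c * (r - z s))
      (ρ - c * (r - z t) - x t * (c * y t)) t) ∧
    (∀ t, HasDerivAt (fun s => c * y s)
      (-(c * y t) + x t * (c * (r - z t))) t) :=
  stmt_0_general ζ σ b r a hζ hb1 hσar c ρ α hc hρ hα x y z hx hy hz
end

section
/- Let ν₁, ν₂, h > 0 and set σ = ν₂/ν₁, b = 1/ν₁, a = −ν₂²/h², r = h²/(ν₁·ν₂). If (X, Y, Z) : ℝ → ℝ³ is differentiable and satisfies the Rabinovich system Ẋ = h·Y − ν₁·X − Y·Z, Ẏ = h·X − ν₂·Y + X·Z, Ż = −Z + X·Y, then the functions x(t) = ν₁⁻¹·Y(t/ν₁), y(t) = ν₁⁻¹·ν₂⁻¹·h·X(t/ν₁), z(t) = ν₁⁻¹·ν₂⁻¹·h·Z(t/ν₁) satisfy the Lorenz-like system with parameters (r, σ, b, a); moreover these parameters satisfy a < 0 and σ = −a·r. -/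
/-! The substitution is a linear change of coordinates combined with the time rescaling
`t ↦ t / ν₁`, so by the chain rule each new derivative is `ν₁⁻¹` times a constant multiple of
the corresponding Rabinovich right-hand side; matching it with the Lorenz-like right-hand side is
then an identity of rational functions in `ν₁, ν₂, h`. -/

theorem HasDerivAt.comp_div_const {𝕜 : Type*} [NontriviallyNormedField 𝕜] {f : 𝕜 → 𝕜}
    {f' t : 𝕜} (k : 𝕜) (hf : HasDerivAt f f' (t / k)) :
    HasDerivAt (fun s => f (s / k)) (f' / k) t := by
  have hdiv : HasDerivAt (fun s : 𝕜 => s / k) k⁻¹ t := by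
    simpa only [one_div] using (hasDerivAt_id' t).div_const k
  exact (hf.comp t hdiv).congr_deriv (div_eq_mul_inv f' k).symm

/-- The change of variables `x(t) = ν₁⁻¹·Y(t/ν₁)`, `y(t) = ν₁⁻¹·ν₂⁻¹·h·X(t/ν₁)`,
`z(t) = ν₁⁻¹·ν₂⁻¹·h·Z(t/ν₁)` transforms the Rabinovich system into the
Lorenz-like system with parameters `r = h²/(ν₁ν₂)`, `σ = ν₂/ν₁`, `b = 1/ν₁`,
`a = −ν₂²/h²`, and these parameters satisfy `a < 0`, `σ = −a·r`. -/
theorem stmt_1 (ν₁ ν₂ h : ℝ) (hν₁ : 0 < ν₁) (hν₂ : 0 < ν₂) (hh : 0 < h)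
    (σ b a r : ℝ)
    (hσ : σ = ν₂ / ν₁) (hb : b = 1 / ν₁) (ha : a = -(ν₂ ^ 2) / h ^ 2)
    (hr : r = h ^ 2 / (ν₁ * ν₂))
    (X Y Z : ℝ → ℝ)
    (hX : ∀ t, HasDerivAt X (h * Y t - ν₁ * X t - Y t * Z t) t)
    (hY : ∀ t, HasDerivAt Y (h * X t - ν₂ * Y t + X t * Z t) t)
    (hZ : ∀ t, HasDerivAt Z (-Z t + X t * Y t) t) :
    (∀ t, HasDerivAt (fun s => ν₁⁻¹ * Y (s / ν₁))
      (-σ * (ν₁⁻¹ * Y (t / ν₁) - ν₁⁻¹ * ν₂⁻¹ * h * X (t / ν₁))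
        - a * (ν₁⁻¹ * ν₂⁻¹ * h * X (t / ν₁)) * (ν₁⁻¹ * ν₂⁻¹ * h * Z (t / ν₁))) t) ∧
    (∀ t, HasDerivAt (fun s => ν₁⁻¹ * ν₂⁻¹ * h * X (s / ν₁))
      (r * (ν₁⁻¹ * Y (t / ν₁)) - ν₁⁻¹ * ν₂⁻¹ * h * X (t / ν₁)
        - (ν₁⁻¹ * Y (t / ν₁)) * (ν₁⁻¹ * ν₂⁻¹ * h * Z (t / ν₁))) t) ∧
    (∀ t, HasDerivAt (fun s => ν₁⁻¹ * ν₂⁻¹ * h * Z (s / ν₁))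
      (-b * (ν₁⁻¹ * ν₂⁻¹ * h * Z (t / ν₁))
        + (ν₁⁻¹ * Y (t / ν₁)) * (ν₁⁻¹ * ν₂⁻¹ * h * X (t / ν₁))) t) ∧
    a < 0 ∧ σ = -a * r := by
  have hν₁ne := hν₁.ne'
  have hν₂ne := hν₂.ne'
  have hhne := hh.ne'
  subst hσ hb ha hr
  refine ⟨fun t => ?_, fun t => ?_, fun t => ?_, ?_, ?_⟩
  · refine (((hY _).comp_div_const ν₁).const_mul ν₁⁻¹).congr_deriv ?_
    field_simp
    ring
  · refine (((hX _).comp_div_const ν₁).const_mul (ν₁⁻¹ * ν₂⁻¹ * h)).congr_deriv ?_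
    field_simp
  · refine (((hZ _).comp_div_const ν₁).const_mul (ν₁⁻¹ * ν₂⁻¹ * h)).congr_deriv ?_
    field_simp
  · rw [neg_div, neg_lt_zero]
    positivity
  · field_simp
end

section
/- Let r, σ, b > 0 and a ∈ ℝ with b = 1, a > 0, σ > a·r and 0 < r < 1. Then the only zero of the vector field f of the Lorenz-like system (i.e., the only equilibrium) is the origin: f(x, y, z) = (0, 0, 0) implies (x, y, z) = (0, 0, 0). -/
/-!
At an equilibrium `z = xy/b` and `y = rbx/(b + x²)`. Substituting into the first component gives,
after multiplying by `bx(b + x²)`,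
`σ b x² (b(1 - r) + x²) + a x² y² (b + x²) = 0`,
a sum of nonnegative terms as soon as `r ≤ 1` and `a ≥ 0`, the first of which is at least
`σ b x⁴`. Hence `x = 0`, and then `y = z = 0`.
-/

def lorenzLikeField (r σ b a : ℝ) (x y z : ℝ) : ℝ × ℝ × ℝ :=
  (-σ * (x - y) - a * y * z, r * x - y - x * z, -b * z + x * y)

section

variable {r σ b a x y z : ℝ}

theorem lorenzLikeField_eq_zero_iff :
    lorenzLikeField r σ b a x y z = 0 ↔
      -σ * (x - y) - a * y * z = 0 ∧ r * x - y - x * z = 0 ∧ -b * z + x * y = 0 := by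
  simp only [lorenzLikeField, Prod.ext_iff, Prod.fst_zero, Prod.snd_zero]

theorem lorenzLike_equilibrium_identity (h : lorenzLikeField r σ b a x y z = 0) :
    σ * b * x ^ 2 * (b * (1 - r) + x ^ 2) + a * x ^ 2 * y ^ 2 * (b + x ^ 2) = 0 := by
  obtain ⟨h₁, h₂, h₃⟩ := lorenzLikeField_eq_zero_iff.mp h
  linear_combination (-(b + x ^ 2) * b * x) * h₁ + (-σ * b * b * x) * h₂ +
    ((b + x ^ 2) * a * x * y + σ * b * x ^ 2) * h₃

theorem eq_zero_of_lorenzLikeField_eq_zero (hσ : 0 < σ) (hb : 0 < b) (ha : 0 ≤ a)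
    (hr : r ≤ 1) (h : lorenzLikeField r σ b a x y z = 0) : x = 0 ∧ y = 0 ∧ z = 0 := by
  have hx : x = 0 := by
    have hid := lorenzLike_equilibrium_identity h
    have hσb : 0 < σ * b := mul_pos hσ hb
    have h₁ : 0 ≤ σ * b * x ^ 2 * (b * (1 - r)) := by
      have : 0 ≤ 1 - r := by linarith
      positivity
    have h₂ : 0 ≤ a * x ^ 2 * y ^ 2 * (b + x ^ 2) := by positivity
    have hx4 : σ * b * x ^ 4 = 0 := by
      have : 0 ≤ σ * b * x ^ 4 := by positivity
      linarith [show σ * b * x ^ 4 = -(σ * b * x ^ 2 * (b * (1 - r))) -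
        a * x ^ 2 * y ^ 2 * (b + x ^ 2) by linear_combination hid]
    simpa [hσb.ne'] using hx4
  subst hx
  obtain ⟨-, h₂, h₃⟩ := lorenzLikeField_eq_zero_iff.mp h
  refine ⟨rfl, by linarith, ?_⟩
  simpa [hb.ne'] using h₃

end

theorem stmt_3_general (r σ b a : ℝ) (hσ : 0 < σ) (hb : 0 < b)
    (ha : 0 < a) (hr1 : r < 1) :
    ∀ x y z : ℝ,
      (-σ * (x - y) - a * y * z, r * x - y - x * z, -b * z + x * y)
        = ((0 : ℝ), (0 : ℝ), (0 : ℝ)) →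
      (x, y, z) = ((0 : ℝ), (0 : ℝ), (0 : ℝ)) := by
  intro x y z h
  obtain ⟨rfl, rfl, rfl⟩ := eq_zero_of_lorenzLikeField_eq_zero hσ hb ha.le hr1.le h
  rfl

/-- For the Lorenz-like system with `b = 1`, `a > 0`, `σ > a·r` and `0 < r < 1`, the origin is the
only equilibrium. -/
theorem stmt_3 (r σ b a : ℝ) (hr : 0 < r) (hσ : 0 < σ) (hb : 0 < b)
    (hb1 : b = 1) (ha : 0 < a) (hσar : a * r < σ) (hr1 : r < 1) :
    ∀ x y z : ℝ,
      (-σ * (x - y) - a * y * z, r * x - y - x * z, -b * z + x * y)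
        = ((0 : ℝ), (0 : ℝ), (0 : ℝ)) →
      (x, y, z) = ((0 : ℝ), (0 : ℝ), (0 : ℝ)) :=
  stmt_3_general r σ b a hσ hb ha hr1
end

section
/- Let r, σ, b > 0 and a ∈ ℝ with a < 0, σ = −a·r and 0 < r < 1. Then the only zero of the vector field f of the Lorenz-like system (i.e., the only equilibrium) is the origin: f(x, y, z) = (0, 0, 0) implies (x, y, z) = (0, 0, 0). -/
/-!
With `σ = -a r` the first equilibrium equation factors as `a (r (x - y) - y z) = 0`. Eliminating
the cubic terms between it and the second equation leaves `r (x - y)² + (1 - r) y² = 0`, a positive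
definite form when `0 < r < 1`; so `x = y = 0`, and then the third equation forces `z = 0`.
-/

theorem eq_zero_and_eq_zero_of_mul_sq_add_mul_sq_eq_zero {K : Type*} [Field K] [LinearOrder K]
    [IsStrictOrderedRing K] {p q u v : K} (hp : 0 < p) (hq : 0 < q)
    (h : p * u ^ 2 + q * v ^ 2 = 0) : u = 0 ∧ v = 0 := by
  obtain ⟨hu, hv⟩ := (add_eq_zero_iff_of_nonneg (by positivity) (by positivity)).mp h
  exact ⟨pow_eq_zero_iff two_ne_zero |>.mp ((mul_eq_zero.mp hu).resolve_left hp.ne'),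
    pow_eq_zero_iff two_ne_zero |>.mp ((mul_eq_zero.mp hv).resolve_left hq.ne')⟩

namespace LorenzLike

def field (r σ b a x y z : ℝ) : ℝ × ℝ × ℝ :=
  (-σ * (x - y) - a * y * z, r * x - y - x * z, -b * z + x * y)

variable {r σ b a x y z : ℝ}

theorem quadratic_form_eq_zero_of_field_eq_zero (ha : a ≠ 0) (hσ : σ = -a * r)
    (h : field r σ b a x y z = 0) : r * (x - y) ^ 2 + (1 - r) * y ^ 2 = 0 := by
  simp only [field, Prod.mk_eq_zero] at h
  obtain ⟨h₁, h₂, -⟩ := h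
  subst hσ
  have h₁' : r * (x - y) - y * z = 0 :=
    (mul_eq_zero.mp (by linear_combination h₁ : a * (r * (x - y) - y * z) = 0)).resolve_left ha
  linear_combination x * h₁' - y * h₂

theorem eq_zero_of_field_eq_zero (hr : 0 < r) (hr1 : r < 1) (hb : 0 < b) (ha : a ≠ 0)
    (hσ : σ = -a * r) (h : field r σ b a x y z = 0) : x = 0 ∧ y = 0 ∧ z = 0 := by
  obtain ⟨hxy, hy⟩ := eq_zero_and_eq_zero_of_mul_sq_add_mul_sq_eq_zero hr (sub_pos.mpr hr1)
    (quadratic_form_eq_zero_of_field_eq_zero ha hσ h)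
  obtain rfl : y = 0 := hy
  obtain rfl : x = 0 := sub_eq_zero.mp hxy
  simp only [field, Prod.mk_eq_zero] at h
  refine ⟨rfl, rfl, ?_⟩
  exact (mul_eq_zero.mp (by linear_combination -h.2.2 : b * z = 0)).resolve_left hb.ne'

end LorenzLike

theorem stmt_4_general (r σ b a : ℝ) (hr : 0 < r) (hb : 0 < b)
    (ha : a < 0) (hσar : σ = -a * r) (hr1 : r < 1) :
    ∀ x y z : ℝ,
      (-σ * (x - y) - a * y * z, r * x - y - x * z, -b * z + x * y)
        = ((0 : ℝ), (0 : ℝ), (0 : ℝ)) →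
      (x, y, z) = ((0 : ℝ), (0 : ℝ), (0 : ℝ)) := by
  intro x y z h
  obtain ⟨rfl, rfl, rfl⟩ := LorenzLike.eq_zero_of_field_eq_zero hr hr1 hb ha.ne hσar h
  rfl

/-- For the Lorenz-like system with `a < 0`, `σ = −a·r` and `0 < r < 1`, the origin is the
only equilibrium. -/
theorem stmt_4 (r σ b a : ℝ) (hr : 0 < r) (hσ : 0 < σ) (hb : 0 < b)
    (ha : a < 0) (hσar : σ = -a * r) (hr1 : r < 1) :
    ∀ x y z : ℝ,
      (-σ * (x - y) - a * y * z, r * x - y - x * z, -b * z + x * y)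
        = ((0 : ℝ), (0 : ℝ), (0 : ℝ)) →
      (x, y, z) = ((0 : ℝ), (0 : ℝ), (0 : ℝ)) :=
  stmt_4_general r σ b a hr hb ha hσar hr1
end

section
/- Let r, σ, b > 0 and a ∈ ℝ with 0 < r < 1, and assume one of the following parameter regimes: (a = 0), or (b = 1, a > 0 and σ > a·r), or (a < 0 and σ = −a·r). Then the zero equilibrium of the Lorenz-like system is globally attractive: every differentiable solution u : [0, ∞) → ℝ³ of the system satisfies u(t) → (0, 0, 0) as t → ∞. -/
/-!
The weighted energy `V = α x² + β y² + γ z²` with `γ = α a + β` is a strict Lyapunov function: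
this choice of `γ` cancels the cubic terms of `V̇`, leaving
`V̇ = -2 (ασ x² - (ασ + βr) x y + β y² + γ b z²)`. In each regime one can pick `α, β > 0` with
`γ > 0` and `(ασ + βr)² < 4 ασ β`, so that this form is negative definite and `V̇ ≤ -κ V`
for some `κ > 0`. Grönwall's inequality then gives exponential decay of `V`, hence of every
coordinate.
-/

open Filter Real Topology

lemma mul_sq_add_sq_le_quadratic {A B C : ℝ} (hA : 0 < A) (hC : 0 < C) (X Y : ℝ) :
    (4 * A * C - B ^ 2) / (4 * (A + C)) * (X ^ 2 + Y ^ 2) ≤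
      A * X ^ 2 + B * X * Y + C * Y ^ 2 := by
  rw [div_mul_eq_mul_div, div_le_iff₀ (by positivity)]
  -- after clearing the denominator, the difference of the two sides is `(2AX + BY)² + (BX + 2CY)²`
  nlinarith [sq_nonneg (2 * A * X + B * Y), sq_nonneg (B * X + 2 * C * Y)]

lemma exists_pos_mul_le_quadratic {A B C α β : ℝ} (hA : 0 < A) (hC : 0 < C)
    (hdisc : B ^ 2 < 4 * A * C) (hα : 0 < α) (hβ : 0 < β) :
    ∃ c > 0, ∀ X Y : ℝ, c * (α * X ^ 2 + β * Y ^ 2) ≤ A * X ^ 2 + B * X * Y + C * Y ^ 2 := by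
  set μ := (4 * A * C - B ^ 2) / (4 * (A + C))
  have hμ : 0 < μ := div_pos (by linarith) (by positivity)
  refine ⟨min (μ / α) (μ / β), lt_min (div_pos hμ hα) (div_pos hμ hβ), fun X Y => ?_⟩
  have hcα : min (μ / α) (μ / β) * α ≤ μ :=
    (mul_le_mul_of_nonneg_right (min_le_left _ _) hα.le).trans_eq (div_mul_cancel₀ μ hα.ne')
  have hcβ : min (μ / α) (μ / β) * β ≤ μ :=
    (mul_le_mul_of_nonneg_right (min_le_right _ _) hβ.le).trans_eq (div_mul_cancel₀ μ hβ.ne')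
  calc min (μ / α) (μ / β) * (α * X ^ 2 + β * Y ^ 2)
      = min (μ / α) (μ / β) * α * X ^ 2 + min (μ / α) (μ / β) * β * Y ^ 2 := by ring
    _ ≤ μ * X ^ 2 + μ * Y ^ 2 := by gcongr
    _ = μ * (X ^ 2 + Y ^ 2) := by ring
    _ ≤ A * X ^ 2 + B * X * Y + C * Y ^ 2 := mul_sq_add_sq_le_quadratic hA hC X Y

lemma le_mul_exp_neg_of_hasDerivAt_le {f f' : ℝ → ℝ} {κ : ℝ}
    (hf : ∀ t, 0 ≤ t → HasDerivAt f (f' t) t) (hf' : ∀ t, 0 ≤ t → f' t ≤ -κ * f t)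
    {t : ℝ} (ht : 0 ≤ t) : f t ≤ f 0 * exp (-κ * t) := by
  have hcont : ContinuousOn f (Set.Icc 0 t) := fun s hs =>
    (hf s hs.1).continuousAt.continuousWithinAt
  have := le_gronwallBound_of_liminf_deriv_right_le (K := -κ) (ε := 0) hcont
    (fun s hs _ hr => (hf s hs.1).hasDerivWithinAt.liminf_right_slope_le hr) le_rfl
    (fun s hs => (hf' s hs.1).trans_eq (add_zero _).symm) t ⟨ht, le_rfl⟩
  rwa [sub_zero, gronwallBound_ε0] at this

lemma tendsto_zero_of_hasDerivAt_le_neg_mul {f f' : ℝ → ℝ} {κ : ℝ} (hκ : 0 < κ)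
    (hf0 : ∀ t, 0 ≤ f t) (hf : ∀ t, 0 ≤ t → HasDerivAt f (f' t) t)
    (hf' : ∀ t, 0 ≤ t → f' t ≤ -κ * f t) : Tendsto f atTop (𝓝 0) := by
  have hexp : Tendsto (fun t => f 0 * exp (-κ * t)) atTop (𝓝 0) := by
    have hlin : Tendsto (fun t => -κ * t) atTop atBot :=
      tendsto_id.const_mul_atTop_of_neg (neg_neg_of_pos hκ)
    simpa using (tendsto_exp_atBot.comp hlin).const_mul (f 0)
  exact tendsto_of_tendsto_of_tendsto_of_le_of_le' tendsto_const_nhds hexp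
    (Eventually.of_forall hf0)
    (eventually_ge_atTop 0 |>.mono fun t ht => le_mul_exp_neg_of_hasDerivAt_le hf hf' ht)

lemma tendsto_zero_of_mul_sq_le {f g : ℝ → ℝ} {δ : ℝ} (hδ : 0 < δ)
    (hfg : ∀ t, δ * f t ^ 2 ≤ g t) (hg : Tendsto g atTop (𝓝 0)) : Tendsto f atTop (𝓝 0) := by
  refine squeeze_zero_norm (a := fun t => √(g t / δ)) (fun t => abs_le_sqrt ?_) ?_
  · rw [le_div_iff₀ hδ, mul_comm]
    exact hfg t
  · simpa using (hg.div_const δ).sqrt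

lemma hasDerivAt_weighted_sum_sq {x y z : ℝ → ℝ} {x' y' z' t : ℝ} (α β γ : ℝ)
    (hx : HasDerivAt x x' t) (hy : HasDerivAt y y' t) (hz : HasDerivAt z z' t) :
    HasDerivAt (fun s => α * x s ^ 2 + β * y s ^ 2 + γ * z s ^ 2)
      (2 * (α * x t * x' + β * y t * y' + γ * z t * z')) t := by
  refine ((((hx.pow 2).const_mul α).add ((hy.pow 2).const_mul β)).add
    ((hz.pow 2).const_mul γ)).congr_deriv ?_
  push_cast
  ring

section LorenzLike

variable {r σ b a : ℝ}

lemma exists_lyapunov_weights (hr : 0 < r) (hσ : 0 < σ) (hr1 : r < 1)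
    (ha : 0 ≤ a ∨ σ = -a * r) :
    ∃ α β : ℝ, 0 < α ∧ 0 < β ∧ 0 < α * a + β ∧ (α * σ + β * r) ^ 2 < 4 * (α * σ) * β := by
  have hσ2 : 0 < σ ^ 2 := by positivity
  rcases ha with ha | hσa
  · refine ⟨1, σ, one_pos, hσ, by linarith, ?_⟩
    nlinarith [mul_pos hσ2 (show 0 < (1 - r) * (3 + r) by nlinarith)]
  · refine ⟨r ^ 2, (2 - r) * σ, by positivity, mul_pos (by linarith) hσ, ?_, ?_⟩
    · nlinarith [mul_pos hσ (sub_pos.2 hr1)]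
    · nlinarith [mul_pos (mul_pos hσ2 (pow_pos hr 2)) (sub_pos.2 hr1)]

lemma lyapunov_derivative_eq (α β x y z : ℝ) :
    α * x * (-σ * (x - y) - a * y * z) + β * y * (r * x - y - x * z)
      + (α * a + β) * z * (-b * z + x * y)
      = -(α * σ * x ^ 2 + -(α * σ + β * r) * x * y + β * y ^ 2 + (α * a + β) * b * z ^ 2) := by
  ring

end LorenzLike

/-- For the Lorenz-like system with `0 < r < 1`, in each of the three parameter
regimes (Lorenz `a = 0`; Glukhovsky–Dolzhansky `b = 1`, `a > 0`, `σ > a·r`;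
Rabinovich `a < 0`, `σ = −a·r`), the zero equilibrium is globally attractive:
every solution on `[0, ∞)` tends to the origin. -/
theorem stmt_5 (r σ b a : ℝ) (hr : 0 < r) (hσ : 0 < σ) (hb : 0 < b) (hr1 : r < 1)
    (hcase : a = 0 ∨ (b = 1 ∧ 0 < a ∧ a * r < σ) ∨ (a < 0 ∧ σ = -a * r))
    (x y z : ℝ → ℝ)
    (hx : ∀ t, 0 ≤ t → HasDerivAt x (-σ * (x t - y t) - a * y t * z t) t)
    (hy : ∀ t, 0 ≤ t → HasDerivAt y (r * x t - y t - x t * z t) t)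
    (hz : ∀ t, 0 ≤ t → HasDerivAt z (-b * z t + x t * y t) t) :
    Filter.Tendsto (fun t => (x t, y t, z t)) Filter.atTop
      (nhds ((0 : ℝ), (0 : ℝ), (0 : ℝ))) := by
  have ha : 0 ≤ a ∨ σ = -a * r := by
    rcases hcase with ha | ⟨-, ha, -⟩ | ⟨-, hσa⟩
    exacts [.inl ha.ge, .inl ha.le, .inr hσa]
  obtain ⟨α, β, hα, hβ, hγ, hdisc⟩ := exists_lyapunov_weights hr hσ hr1 ha
  obtain ⟨c, hc, hform⟩ := exists_pos_mul_le_quadratic (B := -(α * σ + β * r))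
    (mul_pos hα hσ) hβ (by rwa [neg_sq]) hα hβ
  set γ := α * a + β
  set V := fun t => α * x t ^ 2 + β * y t ^ 2 + γ * z t ^ 2
  have hV_nonneg : ∀ t, 0 ≤ V t := fun t => by positivity
  have hV_le : ∀ t, min c b * V t ≤ c * (α * x t ^ 2 + β * y t ^ 2) + b * (γ * z t ^ 2) :=
    fun t => by
      rw [show V t = (α * x t ^ 2 + β * y t ^ 2) + γ * z t ^ 2 from rfl, mul_add]
      gcongr
      exacts [min_le_left c b, min_le_right c b]
  have hV : Tendsto V atTop (𝓝 0) := by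
    refine tendsto_zero_of_hasDerivAt_le_neg_mul (mul_pos two_pos (lt_min hc hb)) hV_nonneg
      (fun t ht => hasDerivAt_weighted_sum_sq α β γ (hx t ht) (hy t ht) (hz t ht)) fun t _ => ?_
    rw [lyapunov_derivative_eq]
    linarith [hform (x t) (y t), hV_le t]
  refine (tendsto_zero_of_mul_sq_le hα (fun t => ?_) hV).prodMk_nhds
    ((tendsto_zero_of_mul_sq_le hβ (fun t => ?_) hV).prodMk_nhds
      (tendsto_zero_of_mul_sq_le hγ (fun t => ?_) hV)) <;>
  linarith [mul_nonneg hα.le (sq_nonneg (x t)), mul_nonneg hβ.le (sq_nonneg (y t)),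
    mul_nonneg hγ.le (sq_nonneg (z t))]
end

section
/- Let r, σ, b > 0 and a ∈ ℝ with a > 0, σ > a·r and r > 1. Set ξ = (σ·b/(2a²))·(a(r−2) − σ + √((σ − a·r)² + 4aσ)). Then ξ > 0, σ·b + a·ξ > 0, and the two points S± = (±x₁, ±y₁, z₁), where x₁ = σ·b·√ξ/(σ·b + a·ξ), y₁ = √ξ, z₁ = σ·ξ/(σ·b + a·ξ), are zeros of the vector field f of the Lorenz-like system (i.e., equilibria). -/
/-!
Writing `D = σb + aξ`, the choice `x = σb·y/D`, `z = σξ/D` with `y² = ξ` makes the first and third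
equilibrium equations identities, and the second reduces to the quadratic
`a²ξ² + σb(σ + 2a − ar)ξ − (r − 1)σ²b² = 0`, whose positive root is the given `ξ`.
The field is invariant under `(x, y, z) ↦ (−x, −y, z)`, which yields the second equilibrium.
-/

def IsLorenzLikeEquilibrium (r σ b a x y z : ℝ) : Prop :=
  -σ * (x - y) - a * y * z = 0 ∧ r * x - y - x * z = 0 ∧ -b * z + x * y = 0

namespace IsLorenzLikeEquilibrium

variable {r σ b a x y z : ℝ}

theorem neg (h : IsLorenzLikeEquilibrium r σ b a x y z) :
    IsLorenzLikeEquilibrium r σ b a (-x) (-y) z := by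
  obtain ⟨h₁, h₂, h₃⟩ := h
  exact ⟨by linear_combination -h₁, by linear_combination -h₂, by linear_combination h₃⟩

end IsLorenzLikeEquilibrium

theorem isLorenzLikeEquilibrium_of_sq_eq {r σ b a ξ y : ℝ} (hD : σ * b + a * ξ ≠ 0)
    (hy : y ^ 2 = ξ)
    (hξ : a ^ 2 * ξ ^ 2 + σ * b * (σ + 2 * a - a * r) * ξ - (r - 1) * σ ^ 2 * b ^ 2 = 0) :
    IsLorenzLikeEquilibrium r σ b a (σ * b * y / (σ * b + a * ξ)) y
      (σ * ξ / (σ * b + a * ξ)) := by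
  refine ⟨?_, ?_, ?_⟩
  · field_simp
    ring
  · field_simp
    linear_combination (-y) * hξ
  · rw [← hy]
    ring

theorem lorenzXi_quadratic {r σ b a s : ℝ} (ha : a ≠ 0)
    (hs : s ^ 2 = (σ - a * r) ^ 2 + 4 * a * σ) :
    let ξ := σ * b / (2 * a ^ 2) * (a * (r - 2) - σ + s)
    a ^ 2 * ξ ^ 2 + σ * b * (σ + 2 * a - a * r) * ξ - (r - 1) * σ ^ 2 * b ^ 2 = 0 := by
  intro ξ
  simp only [ξ]
  field_simp
  linear_combination σ ^ 2 * b ^ 2 * hs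

theorem lorenzXi_pos {r σ b a : ℝ} (hσ : 0 < σ) (hb : 0 < b) (ha : 0 < a) (hr : 1 < r) :
    0 < σ * b / (2 * a ^ 2) *
      (a * (r - 2) - σ + Real.sqrt ((σ - a * r) ^ 2 + 4 * a * σ)) := by
  have hroot : σ - a * (r - 2) < Real.sqrt ((σ - a * r) ^ 2 + 4 * a * σ) :=
    Real.lt_sqrt_of_sq_lt (by nlinarith [mul_pos (mul_pos ha ha) (sub_pos.2 hr)])
  have : 0 < a * (r - 2) - σ + Real.sqrt ((σ - a * r) ^ 2 + 4 * a * σ) := by linarith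
  positivity

theorem stmt_7_general (r σ b a : ℝ) (hσ : 0 < σ) (hb : 0 < b)
    (ha : 0 < a) (hr1 : 1 < r) :
    let ξ := σ * b / (2 * a ^ 2) *
      (a * (r - 2) - σ + Real.sqrt ((σ - a * r) ^ 2 + 4 * a * σ))
    let x₁ := σ * b * Real.sqrt ξ / (σ * b + a * ξ)
    let y₁ := Real.sqrt ξ
    let z₁ := σ * ξ / (σ * b + a * ξ)
    0 < ξ ∧ 0 < σ * b + a * ξ ∧
    (-σ * (x₁ - y₁) - a * y₁ * z₁ = 0 ∧
      r * x₁ - y₁ - x₁ * z₁ = 0 ∧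
      -b * z₁ + x₁ * y₁ = 0) ∧
    (-σ * (-x₁ - -y₁) - a * -y₁ * z₁ = 0 ∧
      r * -x₁ - -y₁ - -x₁ * z₁ = 0 ∧
      -b * z₁ + -x₁ * -y₁ = 0) := by
  intro ξ x₁ y₁ z₁
  have hξ : 0 < ξ := lorenzXi_pos hσ hb ha hr1
  have hD : 0 < σ * b + a * ξ := by positivity
  have hS : IsLorenzLikeEquilibrium r σ b a x₁ y₁ z₁ :=
    isLorenzLikeEquilibrium_of_sq_eq hD.ne' (Real.sq_sqrt hξ.le)
      (lorenzXi_quadratic ha.ne' (Real.sq_sqrt (by positivity)))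
  exact ⟨hξ, hD, hS, hS.neg⟩

/-- For the Lorenz-like system with `a > 0`, `σ > a·r` and `r > 1`, the quantity
`ξ = (σb/(2a²))·(a(r−2) − σ + √((σ − ar)² + 4aσ))` is positive, `σb + aξ > 0`,
and the two symmetric points `S± = (±x₁, ±y₁, z₁)` are equilibria. -/
theorem stmt_7 (r σ b a : ℝ) (hr : 0 < r) (hσ : 0 < σ) (hb : 0 < b)
    (ha : 0 < a) (hσar : a * r < σ) (hr1 : 1 < r) :
    let ξ := σ * b / (2 * a ^ 2) *
      (a * (r - 2) - σ + Real.sqrt ((σ - a * r) ^ 2 + 4 * a * σ))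
    let x₁ := σ * b * Real.sqrt ξ / (σ * b + a * ξ)
    let y₁ := Real.sqrt ξ
    let z₁ := σ * ξ / (σ * b + a * ξ)
    0 < ξ ∧ 0 < σ * b + a * ξ ∧
    (-σ * (x₁ - y₁) - a * y₁ * z₁ = 0 ∧
      r * x₁ - y₁ - x₁ * z₁ = 0 ∧
      -b * z₁ + x₁ * y₁ = 0) ∧
    (-σ * (-x₁ - -y₁) - a * -y₁ * z₁ = 0 ∧
      r * -x₁ - -y₁ - -x₁ * z₁ = 0 ∧
      -b * z₁ + -x₁ * -y₁ = 0) :=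
  stmt_7_general r σ b a hσ hb ha hr1
end

section
/- Let r, σ, b > 0 and a ∈ ℝ with a < 0, σ = −a·r and r > 1, and let S₊ = (x₁, y₁, z₁) be the nontrivial equilibrium of the Lorenz-like system, where ξ = (σ·b/(2a²))·(a(r−2) − σ + √((σ − a·r)² + 4aσ)), x₁ = σ·b·√ξ/(σ·b + a·ξ), y₁ = √ξ, z₁ = σ·ξ/(σ·b + a·ξ). Then every complex root of the characteristic polynomial of the Jacobian matrix J(x₁, y₁, z₁) has negative real part if and only if one of the following holds: (i) 0 ≤ a·r + 1 < 2r/(r − √(r(r−1))), or (ii) a·r + 1 < 0 and b > (4a(r−1)(a·r+1)·√(r(r−1)) + (a·r − 1)³)/((a·r + 1)² − 4a·r²). -/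
/-!
With `σ = -a r` and `k = √(r (r - 1))`, the equilibrium simplifies to `z₁ = k`, `r x₁ = y₁ (r + k)`,
`y₁² = r b (k - r + 1)`, and the characteristic polynomial of the Jacobian there becomes
`μ³ + (1 + b - a r) μ² + b (r + k - a r (r - k)) μ - 4 a b r (r - 1)`.
By the Routh–Hurwitz criterion (for a real cubic `μ³ + p μ² + q μ + s`, obtained by splitting off
a real root), all roots have negative real part iff `0 < p`, `0 < s` and `s < p q`. Here `p` and `s`
are positive, and `s < p q` is automatic when `a r + 1 ≥ 0` and is the stated lower bound on `b`
when `a r + 1 < 0`.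
-/

open Polynomial

theorem exists_cubic_eq_zero (p q s : ℝ) : ∃ α : ℝ, α ^ 3 + p * α ^ 2 + q * α + s = 0 := by
  have hp := abs_nonneg p; have hq := abs_nonneg q; have hs := abs_nonneg s
  set M := 1 + |p| + |q| + |s|
  have hM : 1 ≤ M := by linarith
  have hMp : 0 ≤ M ^ 3 + p * M ^ 2 + q * M + s := by
    nlinarith [neg_abs_le p, neg_abs_le q, neg_abs_le s,
      mul_le_mul_of_nonneg_right (neg_abs_le p) (sq_nonneg M),
      mul_le_mul_of_nonneg_right (neg_abs_le q) (by linarith : (0:ℝ) ≤ M),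
      mul_le_mul_of_nonneg_left hM hq, mul_le_mul_of_nonneg_left hM hs]
  have hMn : (-M) ^ 3 + p * (-M) ^ 2 + q * (-M) + s ≤ 0 := by
    nlinarith [le_abs_self p, le_abs_self q, le_abs_self s,
      mul_le_mul_of_nonneg_right (le_abs_self p) (sq_nonneg M),
      mul_le_mul_of_nonneg_right (neg_abs_le q) (by linarith : (0:ℝ) ≤ M),
      mul_le_mul_of_nonneg_left hM hq, mul_le_mul_of_nonneg_left hM hs]
  obtain ⟨α, -, hα⟩ := intermediate_value_Icc (by linarith : -M ≤ M)
    (by fun_prop : Continuous fun t : ℝ => t ^ 3 + p * t ^ 2 + q * t + s).continuousOn ⟨hMn, hMp⟩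
  exact ⟨α, hα⟩

theorem quadratic_roots_re_neg_iff (u v : ℝ) :
    (∀ μ : ℂ, μ ^ 2 + u * μ + v = 0 → μ.re < 0) ↔ 0 < u ∧ 0 < v := by
  constructor
  · intro h
    obtain ⟨d, hd⟩ := IsAlgClosed.exists_eq_mul_self ((u : ℂ) ^ 2 - 4 * v)
    have hβ := h ((-u + d) / 2) (by linear_combination (-1/4 : ℂ) * hd)
    have hγ := h ((-u - d) / 2) (by linear_combination (-1/4 : ℂ) * hd)
    have hprod : (-u + d) / 2 * ((-u - d) / 2) = (v : ℂ) := by linear_combination (1/4 : ℂ) * hd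
    have hre := congrArg Complex.re hprod
    simp only [Complex.mul_re, Complex.div_ofNat_re, Complex.add_re, Complex.sub_re,
      Complex.neg_re, Complex.ofReal_re, Complex.div_ofNat_im, Complex.add_im, Complex.sub_im,
      Complex.neg_im, Complex.ofReal_im, neg_zero, zero_add, zero_sub] at hre hβ hγ
    constructor
    · linarith
    · nlinarith [mul_pos_of_neg_of_neg hβ hγ, sq_nonneg d.im]
  · rintro ⟨hu, hv⟩ μ hμ
    have hre := congrArg Complex.re hμ
    have him := congrArg Complex.im hμ
    simp only [sq, Complex.add_re, Complex.mul_re, Complex.ofReal_re, Complex.ofReal_im,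
      Complex.add_im, Complex.mul_im, Complex.zero_re, Complex.zero_im] at hre him
    by_contra! hx
    have him0 : μ.im = 0 := by
      have : μ.im * (2 * μ.re + u) = 0 := by linear_combination him
      exact (mul_eq_zero.1 this).resolve_right (by linarith)
    rw [him0] at hre
    nlinarith

-- `(t - α) (t² + u t + v) = t³ + (u - α) t² + (v - α u) t - α v`
theorem hurwitz_iff_of_factor (α u v : ℝ) :
    (α < 0 ∧ 0 < u ∧ 0 < v) ↔
      (0 < u - α ∧ 0 < -α * v ∧ -α * v < (u - α) * (v - α * u)) := by
  constructor
  · rintro ⟨hα, hu, hv⟩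
    refine ⟨by linarith, by nlinarith, ?_⟩
    nlinarith [mul_pos hu (add_pos (mul_pos (neg_pos.2 hα) (by linarith : 0 < u - α)) hv)]
  · rintro ⟨hp, hs, hpq⟩
    have hα : α < 0 := by
      by_contra! hα
      have hq : 0 < v - α * u := by
        by_contra! hq
        nlinarith [mul_nonpos_of_nonneg_of_nonpos hp.le hq]
      have hv : v < 0 := by
        by_contra! hv
        nlinarith [mul_nonneg hα hv]
      have hu : u < 0 := by
        by_contra! hu
        nlinarith [mul_nonneg hα hu]
      linarith
    have hv : 0 < v := by nlinarith
    refine ⟨hα, ?_, hv⟩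
    nlinarith [mul_pos (neg_pos.2 hα) hp]

theorem cubic_roots_re_neg_iff (p q s : ℝ) :
    (∀ μ : ℂ, μ ^ 3 + p * μ ^ 2 + q * μ + s = 0 → μ.re < 0) ↔ 0 < p ∧ 0 < s ∧ s < p * q := by
  obtain ⟨α, hα⟩ := exists_cubic_eq_zero p q s
  have hαC : (α : ℂ) ^ 3 + p * α ^ 2 + q * α + s = 0 := by exact_mod_cast hα
  have hfactor (μ : ℂ) : μ ^ 3 + p * μ ^ 2 + q * μ + s =
      (μ - α) * (μ ^ 2 + ((p + α : ℝ) : ℂ) * μ + ((q + α * (p + α) : ℝ) : ℂ)) := by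
    push_cast
    linear_combination hαC
  have hs : s = -α * (q + α * (p + α)) := by linear_combination hα
  calc (∀ μ : ℂ, μ ^ 3 + p * μ ^ 2 + q * μ + s = 0 → μ.re < 0)
      ↔ α < 0 ∧ ∀ μ : ℂ, μ ^ 2 + ((p + α : ℝ) : ℂ) * μ + ((q + α * (p + α) : ℝ) : ℂ) = 0 →
          μ.re < 0 := by
        simp only [hfactor, mul_eq_zero, sub_eq_zero]
        refine ⟨fun h => ⟨by simpa using h α (.inl rfl), fun μ hμ => h μ (.inr hμ)⟩, ?_⟩
        rintro ⟨hα, hquad⟩ μ (rfl | hμ)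
        exacts [by simpa using hα, hquad μ hμ]
    _ ↔ α < 0 ∧ 0 < p + α ∧ 0 < q + α * (p + α) := by rw [quadratic_roots_re_neg_iff]
    _ ↔ 0 < p ∧ 0 < s ∧ s < p * q := by
        rw [hurwitz_iff_of_factor, hs, add_sub_cancel_right, add_sub_cancel_right]

theorem Matrix.charpoly_fin_three {R : Type*} [CommRing R] (M : Matrix (Fin 3) (Fin 3) R) :
    M.charpoly = X ^ 3 - C M.trace * X ^ 2
      + C (M 0 0 * M 1 1 - M 0 1 * M 1 0 + M 0 0 * M 2 2 - M 0 2 * M 2 0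
          + M 1 1 * M 2 2 - M 1 2 * M 2 1) * X - C M.det := by
  simp only [charpoly, det_fin_three, trace_fin_three, charmatrix_apply, diagonal_apply_eq,
    ne_eq, Fin.reduceEq, not_false_eq_true, diagonal_apply_ne, map_add, map_sub, map_mul]
  ring

def lorenzLikeJacobian (r σ b a x y z : ℝ) : Matrix (Fin 3) (Fin 3) ℝ :=
  !![-σ, σ - a * z, -a * y; r - z, -1, -x; y, x, -b]

theorem lorenzLikeJacobian_charpoly_of_rabinovich {r b a k x y : ℝ} (hr : r ≠ 0)
    (hk : k ^ 2 = r * (r - 1)) (hy : y ^ 2 = r * b * (k - (r - 1))) (hx : x * r = y * (r + k)) :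
    (lorenzLikeJacobian r (-a * r) b a x y k).charpoly =
      X ^ 3 + C (1 + b - a * r) * X ^ 2 + C (b * (r + k - a * r * (r - k))) * X
        + C (-(4 * a * b * r * (r - 1))) := by
  have hxy : x * y = b * k := by
    refine mul_left_cancel₀ hr ?_
    linear_combination y * hx + (r + k) * hy + r * b * hk
  have hx2 : x ^ 2 = b * (r + k - 1) := by
    refine mul_left_cancel₀ hr ?_
    linear_combination x * hx + (r + k) * hxy + b * hk
  set M := lorenzLikeJacobian r (-a * r) b a x y k
  obtain ⟨htr, hminors, hdet⟩ : M.trace = -(1 + b - a * r) ∧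
      M 0 0 * M 1 1 - M 0 1 * M 1 0 + M 0 0 * M 2 2 - M 0 2 * M 2 0
        + M 1 1 * M 2 2 - M 1 2 * M 2 1 = b * (r + k - a * r * (r - k)) ∧
      M.det = 4 * a * b * r * (r - 1) := by
    simp only [M, lorenzLikeJacobian, Matrix.trace_fin_three, Matrix.det_fin_three,
      Matrix.of_apply, Matrix.cons_val', Matrix.cons_val_zero, Matrix.cons_val_one,
      Matrix.cons_val, Matrix.cons_val_fin_one]
    refine ⟨by ring, by linear_combination (-a) * hk + a * hy + hx2, ?_⟩
    linear_combination a * r * hx2 + 2 * a * k * hxy - a * hy + 3 * a * b * hk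
  rw [Matrix.charpoly_fin_three, htr, hminors, hdet, C_neg, C_neg]
  ring

theorem rabinovich_xi_eq {r b a : ℝ} (hr1 : 1 ≤ r) (ha : a < 0) :
    -a * r * b / (2 * a ^ 2) *
        (a * (r - 2) - -a * r + √((-a * r - a * r) ^ 2 + 4 * a * (-a * r))) =
      r * b * (√(r * (r - 1)) - (r - 1)) := by
  have hdisc : (-a * r - a * r) ^ 2 + 4 * a * (-a * r) = (-2 * a * √(r * (r - 1))) ^ 2 := by
    rw [mul_pow, Real.sq_sqrt (by nlinarith)]
    ring
  rw [hdisc, Real.sqrt_sq (by have := Real.sqrt_nonneg (r * (r - 1)); nlinarith)]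
  field_simp [ha.ne]
  ring

theorem rabinovich_equilibrium_coords {r b a k ξ y : ℝ} (hr : r ≠ 0) (hb : b ≠ 0) (ha : a ≠ 0)
    (hk : k ^ 2 = r * (r - 1)) (hkr : k ≠ r) (hξ : ξ = r * b * (k - (r - 1))) :
    -a * r * ξ / (-a * r * b + a * ξ) = k ∧
      -a * r * b * y / (-a * r * b + a * ξ) * r = y * (r + k) := by
  have hden : -a * r * b + a * ξ = a * r * b * (k - r) := by rw [hξ]; ring
  have hden0 : a * r * b * (k - r) ≠ 0 := by
    have := sub_ne_zero.2 hkr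
    positivity
  rw [hden]
  constructor
  · rw [div_eq_iff hden0, hξ]
    linear_combination (-(a * r * b)) * hk
  · rw [div_mul_eq_mul_div, div_eq_iff hden0]
    linear_combination (-(a * r * b * y)) * hk

theorem sqrt_mul_sub_one_mem_Ioo {r : ℝ} (hr : 1 < r) :
    √(r * (r - 1)) ∈ Set.Ioo (r - 1) r := by
  constructor
  · exact Real.lt_sqrt_of_sq_lt (by nlinarith)
  · exact (Real.sqrt_lt' (by linarith)).2 (by nlinarith)

theorem rabinovich_threshold_eq {r a k : ℝ} (hk : k ^ 2 = r * (r - 1))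
    (hA : r + k - a * r * (r - k) ≠ 0) (hD : (a * r + 1) ^ 2 - 4 * a * r ^ 2 ≠ 0) :
    ((a * r - 1) * (r + k - a * r * (r - k)) - 4 * a * r * (r - 1)) / (r + k - a * r * (r - k)) =
      (4 * a * (r - 1) * (a * r + 1) * k + (a * r - 1) ^ 3) /
        ((a * r + 1) ^ 2 - 4 * a * r ^ 2) := by
  rw [div_eq_div_iff hA hD]
  linear_combination (-4 * a * (r - 1) * (1 + a * r) ^ 2) * hk

theorem rabinovich_threshold_numerator_neg {r a k : ℝ} (hr1 : 1 < r) (ha : a < 0)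
    (hk1 : r - 1 < k) (hkr : k < r) (h : 0 ≤ a * r + 1) :
    (a * r - 1) * (r + k - a * r * (r - k)) - 4 * a * r * (r - 1) < 0 := by
  have ht : 0 < -a * r := by nlinarith
  nlinarith [mul_nonneg h (by linarith : (0 : ℝ) ≤ 2 * r - 1),
    mul_pos (by linarith : 0 < k - (r - 1)) (by linarith : 0 < 1 - a * r),
    mul_nonneg (mul_nonneg ht.le (by linarith : (0 : ℝ) ≤ 1 - a * r))
      (by linarith : (0 : ℝ) ≤ r - k)]

theorem rabinovich_hurwitz_iff {r b a k : ℝ} (hr1 : 1 < r) (hb : 0 < b) (ha : a < 0)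
    (hk : k ^ 2 = r * (r - 1)) (hk1 : r - 1 < k) (hkr : k < r) :
    (0 < 1 + b - a * r ∧ 0 < -(4 * a * b * r * (r - 1)) ∧
        -(4 * a * b * r * (r - 1)) < (1 + b - a * r) * (b * (r + k - a * r * (r - k)))) ↔
      ((0 ≤ a * r + 1 ∧ a * r + 1 < 2 * r / (r - k)) ∨
       (a * r + 1 < 0 ∧
          b > (4 * a * (r - 1) * (a * r + 1) * k + (a * r - 1) ^ 3) /
            ((a * r + 1) ^ 2 - 4 * a * r ^ 2))) := by
  have har : 0 < -a * r := by nlinarith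
  have hA : 0 < r + k - a * r * (r - k) := by nlinarith
  have hD : 0 < (a * r + 1) ^ 2 - 4 * a * r ^ 2 := by nlinarith
  have hp : 0 < 1 + b - a * r := by linarith
  have hs : 0 < -(4 * a * b * r * (r - 1)) := by nlinarith [mul_pos har hb]
  -- `p q - s = b ((1 + b - a r) A + 4 a r (r - 1))` with `A = r + k - a r (r - k)`
  have hstable : -(4 * a * b * r * (r - 1)) < (1 + b - a * r) * (b * (r + k - a * r * (r - k))) ↔
      ((a * r - 1) * (r + k - a * r * (r - k)) - 4 * a * r * (r - 1)) / (r + k - a * r * (r - k))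
        < b := by
    rw [div_lt_iff₀ hA]
    constructor <;> intro h <;> nlinarith
  rcases le_or_gt 0 (a * r + 1) with h | h
  · refine iff_of_true ⟨hp, hs, hstable.2 ?_⟩ (.inl ⟨h, ?_⟩)
    · exact (div_neg_of_neg_of_pos
        (rabinovich_threshold_numerator_neg hr1 ha hk1 hkr h) hA).trans hb
    · rw [lt_div_iff₀ (by linarith)]
      nlinarith
  · simp only [hp, hs, hstable, rabinovich_threshold_eq hk hA.ne' hD.ne', h, not_le.2 h, true_and,
      false_and, false_or, gt_iff_lt]

theorem stmt_10_general (r σ b a : ℝ) (hb : 0 < b)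
    (ha : a < 0) (hσar : σ = -a * r) (hr1 : 1 < r) :
    let ξ := σ * b / (2 * a ^ 2) *
      (a * (r - 2) - σ + Real.sqrt ((σ - a * r) ^ 2 + 4 * a * σ))
    let x₁ := σ * b * Real.sqrt ξ / (σ * b + a * ξ)
    let y₁ := Real.sqrt ξ
    let z₁ := σ * ξ / (σ * b + a * ξ)
    let J : Matrix (Fin 3) (Fin 3) ℝ :=
      !![-σ, σ - a * z₁, -a * y₁; r - z₁, -1, -x₁; y₁, x₁, -b]
    ((∀ μ : ℂ, (Polynomial.aeval μ) (Matrix.charpoly J) = 0 → μ.re < 0) ↔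
      ((0 ≤ a * r + 1 ∧
          a * r + 1 < 2 * r / (r - Real.sqrt (r * (r - 1)))) ∨
       (a * r + 1 < 0 ∧
          b > (4 * a * (r - 1) * (a * r + 1) * Real.sqrt (r * (r - 1))
                + (a * r - 1) ^ 3) / ((a * r + 1) ^ 2 - 4 * a * r ^ 2)))) := by
  subst hσar
  intro ξ x₁ y₁ z₁ J
  obtain ⟨hk1, hkr⟩ := sqrt_mul_sub_one_mem_Ioo hr1
  set k := √(r * (r - 1))
  have hk : k ^ 2 = r * (r - 1) := Real.sq_sqrt (by nlinarith)
  have hξ : ξ = r * b * (k - (r - 1)) := rabinovich_xi_eq hr1.le ha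
  have hξpos : 0 < ξ := hξ ▸ mul_pos (mul_pos (by linarith) hb) (by linarith)
  have hy : y₁ ^ 2 = r * b * (k - (r - 1)) := by rw [Real.sq_sqrt hξpos.le, hξ]
  obtain ⟨hz, hx⟩ := rabinovich_equilibrium_coords (y := y₁) (by linarith) hb.ne' ha.ne hk
    hkr.ne hξ
  have hJ : J = lorenzLikeJacobian r (-a * r) b a x₁ y₁ k := by rw [← hz]; rfl
  rw [hJ, lorenzLikeJacobian_charpoly_of_rabinovich (by linarith) hk hy hx]
  simp only [map_add, map_mul, map_pow, aeval_X, aeval_C, Complex.coe_algebraMap,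
    ← Complex.ofReal_mul]
  rw [cubic_roots_re_neg_iff]
  exact rabinovich_hurwitz_iff hr1 hb ha hk hk1 hkr

/-- Stability criterion for the nontrivial equilibria of the Rabinovich case
(`a < 0`, `σ = −a·r`, `r > 1`) of the Lorenz-like system: all complex roots of
the characteristic polynomial of the Jacobian at `S₊` have negative real part
iff condition (i) or (ii) of Lemma 2 holds. -/
theorem stmt_10 (r σ b a : ℝ) (hr : 0 < r) (hσ : 0 < σ) (hb : 0 < b)
    (ha : a < 0) (hσar : σ = -a * r) (hr1 : 1 < r) :
    let ξ := σ * b / (2 * a ^ 2) *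
      (a * (r - 2) - σ + Real.sqrt ((σ - a * r) ^ 2 + 4 * a * σ))
    let x₁ := σ * b * Real.sqrt ξ / (σ * b + a * ξ)
    let y₁ := Real.sqrt ξ
    let z₁ := σ * ξ / (σ * b + a * ξ)
    let J : Matrix (Fin 3) (Fin 3) ℝ :=
      !![-σ, σ - a * z₁, -a * y₁; r - z₁, -1, -x₁; y₁, x₁, -b]
    ((∀ μ : ℂ, (Polynomial.aeval μ) (Matrix.charpoly J) = 0 → μ.re < 0) ↔
      ((0 ≤ a * r + 1 ∧
          a * r + 1 < 2 * r / (r - Real.sqrt (r * (r - 1)))) ∨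
       (a * r + 1 < 0 ∧
          b > (4 * a * (r - 1) * (a * r + 1) * Real.sqrt (r * (r - 1))
                + (a * r - 1) ^ 3) / ((a * r + 1) ^ 2 - 4 * a * r ^ 2)))) :=
  stmt_10_general r σ b a hb ha hσar hr1
end

section
/- Let r, σ, b > 0, a ∈ ℝ, and let δ > 0 satisfy a + δ > 0. Set c = min(σ, 1, b/2), η = (σ + δ·r)/(a + δ), and V(x, y, z) = x² + δ·y² + (a + δ)·(z − η)². Then for every (x, y, z) ∈ ℝ³ the derivative of V along the vector field f of the Lorenz-like system satisfies ∇V(x, y, z) · f(x, y, z) ≤ −2c·V(x, y, z) + b·(σ + δ·r)²/(a + δ). -/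
/-!
Write `w = z - η`. The choice `(a + δ) η = σ + δ r` makes all `x y`-terms of the derivative of
`V = x² + δ y² + (a + δ) w²` cancel, leaving `-2σx² - 2δy² - 2b(a + δ) w z`. Since
`-2 w z ≤ η² - w²` (the difference is `z²`), the derivative is at most
`-2σx² - 2δy² - b(a + δ) w² + b(a + δ) η²`, and `c ≤ σ`, `c ≤ 1`, `2c ≤ b` bound this by `-2cV`
plus the constant `b(a + δ) η² = b(σ + δ r)² / (a + δ)`.
-/

lemma lorenzLike_lyapunov_deriv_eq {σ r a δ b η : ℝ} (hη : (a + δ) * η = σ + δ * r)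
    (x y z : ℝ) :
    2 * x * (-σ * (x - y) - a * y * z)
        + 2 * (δ * y) * (r * x - y - x * z)
        + 2 * ((a + δ) * (z - η)) * (-b * z + x * y)
      = -2 * σ * x ^ 2 - 2 * δ * y ^ 2 - 2 * b * (a + δ) * ((z - η) * z) := by
  linear_combination (-2 * x * y) * hη

lemma neg_two_mul_sub_mul_self_le (z η : ℝ) : -2 * ((z - η) * z) ≤ η ^ 2 - (z - η) ^ 2 := by
  nlinarith [sq_nonneg z]

lemma lorenzLike_lyapunov_deriv_le {σ r a δ b η : ℝ} (hb : 0 ≤ b) (haδ : 0 ≤ a + δ)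
    (hη : (a + δ) * η = σ + δ * r) (x y z : ℝ) :
    2 * x * (-σ * (x - y) - a * y * z)
        + 2 * (δ * y) * (r * x - y - x * z)
        + 2 * ((a + δ) * (z - η)) * (-b * z + x * y)
      ≤ -2 * σ * x ^ 2 - 2 * δ * y ^ 2 - b * (a + δ) * (z - η) ^ 2
          + b * (a + δ) * η ^ 2 := by
  rw [lorenzLike_lyapunov_deriv_eq hη]
  nlinarith [mul_le_mul_of_nonneg_left (neg_two_mul_sub_mul_self_le z η) (mul_nonneg hb haδ)]

theorem stmt_11_general (r σ b a δ : ℝ) (hb : 0 < b)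
    (hδ : 0 < δ) (haδ : 0 < a + δ) :
    let c := min σ (min 1 (b / 2))
    let η := (σ + δ * r) / (a + δ)
    ∀ x y z : ℝ,
      2 * x * (-σ * (x - y) - a * y * z)
        + 2 * (δ * y) * (r * x - y - x * z)
        + 2 * ((a + δ) * (z - η)) * (-b * z + x * y)
      ≤ -2 * c * (x ^ 2 + δ * y ^ 2 + (a + δ) * (z - η) ^ 2)
          + b * (σ + δ * r) ^ 2 / (a + δ) := by
  intro c η x y z
  have hcσ : c ≤ σ := min_le_left _ _
  have hc1 : c ≤ 1 := (min_le_right _ _).trans (min_le_left _ _)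
  have hcb : c ≤ b / 2 := (min_le_right _ _).trans (min_le_right _ _)
  have hη : (a + δ) * η = σ + δ * r := mul_div_cancel₀ _ haδ.ne'
  have hconst : b * (σ + δ * r) ^ 2 / (a + δ) = b * (a + δ) * η ^ 2 := by
    rw [← hη]; field_simp
  rw [hconst]
  refine (lorenzLike_lyapunov_deriv_le hb.le haδ.le hη x y z).trans ?_
  nlinarith [mul_le_mul_of_nonneg_right hcσ (sq_nonneg x),
    mul_le_mul_of_nonneg_right hc1 (mul_nonneg hδ.le (sq_nonneg y)),
    mul_le_mul_of_nonneg_right hcb (mul_nonneg haδ.le (sq_nonneg (z - η)))]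

/-- Lyapunov-type differential inequality for the Lorenz-like system: with
`V(x,y,z) = x² + δy² + (a+δ)(z−η)²`, `η = (σ+δr)/(a+δ)` and `c = min(σ,1,b/2)`,
the derivative of `V` along the vector field satisfies
`∇V·f ≤ −2cV + b(σ+δr)²/(a+δ)` everywhere. -/
theorem stmt_11 (r σ b a δ : ℝ) (hr : 0 < r) (hσ : 0 < σ) (hb : 0 < b)
    (hδ : 0 < δ) (haδ : 0 < a + δ) :
    let c := min σ (min 1 (b / 2))
    let η := (σ + δ * r) / (a + δ)
    ∀ x y z : ℝ,
      2 * x * (-σ * (x - y) - a * y * z)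
        + 2 * (δ * y) * (r * x - y - x * z)
        + 2 * ((a + δ) * (z - η)) * (-b * z + x * y)
      ≤ -2 * c * (x ^ 2 + δ * y ^ 2 + (a + δ) * (z - η) ^ 2)
          + b * (σ + δ * r) ^ 2 / (a + δ) :=
  stmt_11_general r σ b a δ hb hδ haδ
end

section
/- Let r, σ, b > 0, a ∈ ℝ, and let δ > 0 satisfy a + δ > 0. Set c = min(σ, 1, b/2), η = (σ + δ·r)/(a + δ), V(x, y, z) = x² + δ·y² + (a + δ)·(z − η)², and R = b·(σ + δ·r)²/(2c·(a + δ)). If u : [0, ∞) → ℝ³ is a differentiable solution of the Lorenz-like system with V(u(0)) ≤ R, then V(u(t)) ≤ R for all t ≥ 0; i.e., the absorbing set B = {(x, y, z) : V(x, y, z) ≤ R} is positively invariant. -/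
/-!
Along a solution, `V̇ = -2σx² - 2δy² - 2b(a+δ)z(z-η)`: the cubic terms cancel since the
weights of `V` are `1, δ, a+δ`, and the `xy` terms cancel by the choice of `η`. Completing the
square in `z` gives `V̇ ≤ -2cV + b(a+δ)η² = 2c(R - V)`, so `e^{2ct}(V - R)` is nonincreasing and
`V ≤ R` persists.
-/

open Set

theorem le_of_hasDerivAt_le_mul_sub {f f' : ℝ → ℝ} {k M : ℝ}
    (hf : ∀ t, 0 ≤ t → HasDerivAt f (f' t) t)
    (hbound : ∀ t, 0 ≤ t → f' t ≤ k * (M - f t)) (h0 : f 0 ≤ M) {t : ℝ} (ht : 0 ≤ t) :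
    f t ≤ M := by
  set g : ℝ → ℝ := fun s => (f s - M) * Real.exp (k * s)
  have hg : ∀ s, 0 ≤ s → HasDerivAt g ((f' s + k * (f s - M)) * Real.exp (k * s)) s := by
    intro s hs
    have hexp : HasDerivAt (fun u => Real.exp (k * u)) (Real.exp (k * s) * k) s := by
      simpa using ((hasDerivAt_id s).const_mul k).exp
    exact (((hf s hs).sub_const M).mul hexp).congr_deriv (by ring)
  have hanti : AntitoneOn g (Ici 0) := by
    refine antitoneOn_of_hasDerivWithinAt_nonpos (convex_Ici 0)
      (fun s hs => (hg s hs).continuousAt.continuousWithinAt)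
      (fun s hs => (hg s (interior_subset hs)).hasDerivWithinAt) fun s hs => ?_
    have hs : 0 ≤ s := interior_subset hs
    exact mul_nonpos_of_nonpos_of_nonneg (by linarith [hbound s hs]) (Real.exp_nonneg _)
  have hgt : g t ≤ 0 :=
    (hanti self_mem_Ici ht ht).trans (by simpa [g] using sub_nonpos.mpr h0)
  exact sub_nonpos.mp (nonpos_of_mul_nonpos_left hgt (Real.exp_pos _))

section LorenzLike

variable {σ r a b δ η : ℝ}

theorem lorenzLike_lyapunov_derivative_eq (hη : (a + δ) * η = σ + δ * r) (X Y Z : ℝ) :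
    2 * X * (-σ * (X - Y) - a * Y * Z) + δ * (2 * Y * (r * X - Y - X * Z))
      + (a + δ) * (2 * (Z - η) * (-b * Z + X * Y))
      = -2 * σ * X ^ 2 - 2 * δ * Y ^ 2 - 2 * b * (a + δ) * Z * (Z - η) := by
  linear_combination (-2 * X * Y) * hη

theorem lorenzLike_dissipation {c : ℝ} (hcσ : c ≤ σ) (hc1 : c ≤ 1) (hcb : c ≤ b / 2)
    (hb : 0 ≤ b) (hδ : 0 ≤ δ) (haδ : 0 ≤ a + δ) (X Y Z : ℝ) :
    -2 * σ * X ^ 2 - 2 * δ * Y ^ 2 - 2 * b * (a + δ) * Z * (Z - η)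
      ≤ -2 * c * (X ^ 2 + δ * Y ^ 2 + (a + δ) * (Z - η) ^ 2) + b * (a + δ) * η ^ 2 := by
  -- `-2Z(Z - η) = η² - Z² - (Z - η)²`
  nlinarith [mul_nonneg (sub_nonneg.mpr hcσ) (sq_nonneg X),
    mul_nonneg (mul_nonneg hδ (sub_nonneg.mpr hc1)) (sq_nonneg Y),
    mul_nonneg (mul_nonneg (by linarith : 0 ≤ b - 2 * c) haδ) (sq_nonneg (Z - η)),
    mul_nonneg (mul_nonneg hb haδ) (sq_nonneg Z)]

end LorenzLike

theorem stmt_12_general (r σ b a δ : ℝ) (hσ : 0 < σ) (hb : 0 < b)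
    (hδ : 0 < δ) (haδ : 0 < a + δ)
    (x y z : ℝ → ℝ)
    (hx : ∀ t, 0 ≤ t → HasDerivAt x (-σ * (x t - y t) - a * y t * z t) t)
    (hy : ∀ t, 0 ≤ t → HasDerivAt y (r * x t - y t - x t * z t) t)
    (hz : ∀ t, 0 ≤ t → HasDerivAt z (-b * z t + x t * y t) t) :
    let c := min σ (min 1 (b / 2))
    let η := (σ + δ * r) / (a + δ)
    let V : ℝ → ℝ → ℝ → ℝ := fun X Y Z =>
      X ^ 2 + δ * Y ^ 2 + (a + δ) * (Z - η) ^ 2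
    let R := b * (σ + δ * r) ^ 2 / (2 * c * (a + δ))
    V (x 0) (y 0) (z 0) ≤ R → ∀ t, 0 ≤ t → V (x t) (y t) (z t) ≤ R := by
  intro c η V R h0 t ht
  have hη : (a + δ) * η = σ + δ * r := mul_div_cancel₀ _ haδ.ne'
  have hc : 0 < c := lt_min hσ (lt_min one_pos (half_pos hb))
  have hR : 2 * c * R = b * (a + δ) * η ^ 2 := by
    simp only [R, η]
    field_simp
  refine le_of_hasDerivAt_le_mul_sub (f := fun s => V (x s) (y s) (z s)) (k := 2 * c)
    (f' := fun s => 2 * x s * (-σ * (x s - y s) - a * y s * z s)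
      + δ * (2 * y s * (r * x s - y s - x s * z s))
      + (a + δ) * (2 * (z s - η) * (-b * z s + x s * y s)))
    (fun s hs => ?_) (fun s hs => ?_) h0 ht
  · exact ((((hx s hs).fun_pow 2).fun_add (((hy s hs).fun_pow 2).const_mul δ)).fun_add
      ((((hz s hs).sub_const η).fun_pow 2).const_mul (a + δ))).congr_deriv (by push_cast; ring)
  · have hcσ : c ≤ σ := min_le_left _ _
    have hc1 : c ≤ 1 := (min_le_right _ _).trans (min_le_left _ _)
    have hcb : c ≤ b / 2 := (min_le_right _ _).trans (min_le_right _ _)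
    calc _ = _ := lorenzLike_lyapunov_derivative_eq hη (x s) (y s) (z s)
      _ ≤ _ := lorenzLike_dissipation hcσ hc1 hcb hb.le hδ.le haδ.le _ _ _
      _ = 2 * c * (R - V (x s) (y s) (z s)) := by rw [mul_sub, hR]; ring

/-- The absorbing set `B = {V ≤ R}` of the Lorenz-like system, where
`V(x,y,z) = x² + δy² + (a+δ)(z−η)²`, `η = (σ+δr)/(a+δ)`, `c = min(σ,1,b/2)` and
`R = b(σ+δr)²/(2c(a+δ))`, is positively invariant: a solution starting in `B`
stays in `B` for all `t ≥ 0`. -/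
theorem stmt_12 (r σ b a δ : ℝ) (hr : 0 < r) (hσ : 0 < σ) (hb : 0 < b)
    (hδ : 0 < δ) (haδ : 0 < a + δ)
    (x y z : ℝ → ℝ)
    (hx : ∀ t, 0 ≤ t → HasDerivAt x (-σ * (x t - y t) - a * y t * z t) t)
    (hy : ∀ t, 0 ≤ t → HasDerivAt y (r * x t - y t - x t * z t) t)
    (hz : ∀ t, 0 ≤ t → HasDerivAt z (-b * z t + x t * y t) t) :
    let c := min σ (min 1 (b / 2))
    let η := (σ + δ * r) / (a + δ)
    let V : ℝ → ℝ → ℝ → ℝ := fun X Y Z =>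
      X ^ 2 + δ * Y ^ 2 + (a + δ) * (Z - η) ^ 2
    let R := b * (σ + δ * r) ^ 2 / (2 * c * (a + δ))
    V (x 0) (y 0) (z 0) ≤ R → ∀ t, 0 ≤ t → V (x t) (y t) (z t) ≤ R :=
  stmt_12_general r σ b a δ hσ hb hδ haδ x y z hx hy hz
end

section
/- Let r, σ, b > 0, a ∈ ℝ, and let δ > 0 satisfy a + δ > 0. Set c = min(σ, 1, b/2), η = (σ + δ·r)/(a + δ), V(x, y, z) = x² + δ·y² + (a + δ)·(z − η)², and R = b·(σ + δ·r)²/(2c·(a + δ)). Then every differentiable solution u : [0, ∞) → ℝ³ of the Lorenz-like system satisfies limsup_{t → ∞} V(u(t)) ≤ R; i.e., the set B = {(x, y, z) : V(x, y, z) ≤ R} is absorbing. -/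
/-!
Along a solution, `V = x² + δy² + (a+δ)(z−η)²` has derivative
`−2σx² − 2δy² − b(a+δ)(z−η)² − b(a+δ)z² + b(a+δ)η²`: the choice of `η` makes the cross terms in
`xy` and `xyz` cancel. Hence `V' ≤ −2c(V − R)`, and Grönwall gives
`V(t) − R ≤ (V(0) − R)e^{−2ct} → 0`.
-/

open Filter Real

theorem sub_le_mul_exp_of_hasDerivAt_le {f f' : ℝ → ℝ} {k R t : ℝ}
    (hf : ∀ s, 0 ≤ s → HasDerivAt f (f' s) s) (hf' : ∀ s, 0 ≤ s → f' s ≤ -k * (f s - R))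
    (ht : 0 ≤ t) : f t - R ≤ (f 0 - R) * exp (-k * t) := by
  have key := le_gronwallBound_of_liminf_deriv_right_le (f := fun s => f s - R) (f' := f')
    (K := -k) (ε := 0) (a := 0) (b := t)
    (fun s hs => (hf s hs.1).continuousAt.continuousWithinAt.sub continuousWithinAt_const)
    (fun s hs _ hr => ((hf s hs.1).sub_const R).hasDerivWithinAt.liminf_right_slope_le hr)
    le_rfl (fun s hs => by simpa using hf' s hs.1) t ⟨ht, le_rfl⟩
  simpa [gronwallBound_ε0] using key

theorem limsup_le_of_hasDerivAt_le {f f' : ℝ → ℝ} {k R : ℝ} (hk : 0 < k)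
    (hbdd : IsBoundedUnder (· ≥ ·) atTop f)
    (hf : ∀ s, 0 ≤ s → HasDerivAt f (f' s) s) (hf' : ∀ s, 0 ≤ s → f' s ≤ -k * (f s - R)) :
    limsup f atTop ≤ R := by
  have hlim : Tendsto (fun t => R + (f 0 - R) * exp (-k * t)) atTop (nhds R) := by
    have hexp : Tendsto (fun t => exp (-k * t)) atTop (nhds 0) :=
      tendsto_exp_atBot.comp (tendsto_id.const_mul_atTop_of_neg (neg_neg_of_pos hk))
    simpa using (hexp.const_mul (f 0 - R)).const_add R
  calc limsup f atTop ≤ limsup (fun t => R + (f 0 - R) * exp (-k * t)) atTop := by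
        refine limsup_le_limsup ?_ hbdd.isCoboundedUnder_le hlim.isBoundedUnder_le
        filter_upwards [eventually_ge_atTop 0] with t ht
        linarith [sub_le_mul_exp_of_hasDerivAt_le hf hf' ht]
    _ = R := hlim.limsup_eq

theorem lorenz_energy_deriv_le {σ r b a δ c η : ℝ} (X Y Z : ℝ) (hcσ : c ≤ σ) (hc1 : c ≤ 1)
    (hcb : 2 * c ≤ b) (hb : 0 < b) (hδ : 0 < δ) (haδ : 0 < a + δ)
    (hη : (a + δ) * η = σ + δ * r) :
    2 * X * (-σ * (X - Y) - a * Y * Z) + δ * (2 * Y * (r * X - Y - X * Z))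
        + (a + δ) * (2 * (Z - η) * (-b * Z + X * Y))
      ≤ -(2 * c) * (X ^ 2 + δ * Y ^ 2 + (a + δ) * (Z - η) ^ 2) + b * (a + δ) * η ^ 2 := by
  have hX : 0 ≤ (σ - c) * X ^ 2 := mul_nonneg (sub_nonneg.2 hcσ) (sq_nonneg X)
  have hY : 0 ≤ (1 - c) * δ * Y ^ 2 :=
    mul_nonneg (mul_nonneg (sub_nonneg.2 hc1) hδ.le) (sq_nonneg Y)
  have hZη : 0 ≤ (b - 2 * c) * (a + δ) * (Z - η) ^ 2 :=
    mul_nonneg (mul_nonneg (sub_nonneg.2 hcb) haδ.le) (sq_nonneg _)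
  have hZ : 0 ≤ b * (a + δ) * Z ^ 2 := by positivity
  linear_combination 2 * hX + 2 * hY + hZη + hZ - 2 * X * Y * hη

theorem stmt_13_general (r σ b a δ : ℝ) (hσ : 0 < σ) (hb : 0 < b)
    (hδ : 0 < δ) (haδ : 0 < a + δ)
    (x y z : ℝ → ℝ)
    (hx : ∀ t, 0 ≤ t → HasDerivAt x (-σ * (x t - y t) - a * y t * z t) t)
    (hy : ∀ t, 0 ≤ t → HasDerivAt y (r * x t - y t - x t * z t) t)
    (hz : ∀ t, 0 ≤ t → HasDerivAt z (-b * z t + x t * y t) t) :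
    let c := min σ (min 1 (b / 2))
    let η := (σ + δ * r) / (a + δ)
    let V : ℝ → ℝ → ℝ → ℝ := fun X Y Z =>
      X ^ 2 + δ * Y ^ 2 + (a + δ) * (Z - η) ^ 2
    let R := b * (σ + δ * r) ^ 2 / (2 * c * (a + δ))
    Filter.limsup (fun t => V (x t) (y t) (z t)) Filter.atTop ≤ R := by
  intro c η V R
  have hc : 0 < c := lt_min hσ (lt_min one_pos (half_pos hb))
  have hcσ : c ≤ σ := min_le_left _ _
  have hc1 : c ≤ 1 := (min_le_right _ _).trans (min_le_left _ _)
  have hcb : 2 * c ≤ b := by linarith [(min_le_right σ _).trans (min_le_right 1 (b / 2))]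
  have hη : (a + δ) * η = σ + δ * r := mul_div_cancel₀ _ haδ.ne'
  have hR : 2 * c * R = b * (a + δ) * η ^ 2 := by
    simp only [R, ← hη]; field_simp
  refine limsup_le_of_hasDerivAt_le (mul_pos two_pos hc)
    (f' := fun t => 2 * x t * (-σ * (x t - y t) - a * y t * z t)
      + δ * (2 * y t * (r * x t - y t - x t * z t))
      + (a + δ) * (2 * (z t - η) * (-b * z t + x t * y t)))
    (isBoundedUnder_of ⟨0, fun t => by simp only [V]; positivity⟩) (fun t ht => ?_) (fun t _ => ?_)
  · exact ((((hx t ht).pow 2).add (((hy t ht).pow 2).const_mul δ)).add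
      ((((hz t ht).sub_const η).pow 2).const_mul (a + δ))).congr_deriv (by norm_num)
  · linarith [lorenz_energy_deriv_le (x t) (y t) (z t) hcσ hc1 hcb hb hδ haδ hη]

/-- The set `B = {V ≤ R}` is absorbing for the Lorenz-like system: every
solution `u` on `[0, ∞)` satisfies `limsup_{t→∞} V(u(t)) ≤ R`, where
`V(x,y,z) = x² + δy² + (a+δ)(z−η)²`, `η = (σ+δr)/(a+δ)`, `c = min(σ,1,b/2)` and
`R = b(σ+δr)²/(2c(a+δ))`. -/
theorem stmt_13 (r σ b a δ : ℝ) (hr : 0 < r) (hσ : 0 < σ) (hb : 0 < b)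
    (hδ : 0 < δ) (haδ : 0 < a + δ)
    (x y z : ℝ → ℝ)
    (hx : ∀ t, 0 ≤ t → HasDerivAt x (-σ * (x t - y t) - a * y t * z t) t)
    (hy : ∀ t, 0 ≤ t → HasDerivAt y (r * x t - y t - x t * z t) t)
    (hz : ∀ t, 0 ≤ t → HasDerivAt z (-b * z t + x t * y t) t) :
    let c := min σ (min 1 (b / 2))
    let η := (σ + δ * r) / (a + δ)
    let V : ℝ → ℝ → ℝ → ℝ := fun X Y Z =>
      X ^ 2 + δ * Y ^ 2 + (a + δ) * (Z - η) ^ 2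
    let R := b * (σ + δ * r) ^ 2 / (2 * c * (a + δ))
    Filter.limsup (fun t => V (x t) (y t) (z t)) Filter.atTop ≤ R :=
  stmt_13_general r σ b a δ hσ hb hδ haδ x y z hx hy hz
end
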